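/- arXiv:2006.16948 — 4 statements merged into one kernel-verified Lean document; each statement's English description precedes it below -/
import Mathlib

section
/- Let R(·) be the unique solution of dR/dτ = H(τ) R(τ) with R(0) = 1, where H(τ) is the antisymmetric matrix generated by h(τ) = (ν, g cos τ, f sin τ). Then R(π + τ) = T⁽¹⁾ R(τ) T⁽¹⁾ R(π) for all τ ∈ ℝ, where T⁽¹⁾ = diag(−1,1,1). -/
/-!
Since `T = diag(-1, 1, 1)` is an involution with `H(π + τ) = T H(τ) T`, both `τ ↦ R(π + τ)` and
`τ ↦ T R(τ) T R(π)` solve `X' = H(π + τ) X` and agree at `τ = 0`. Solutions of a linear ODE with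
continuous coefficients are unique, because the right-hand side is Lipschitz in `X` on every
compact time interval.
-/

open Matrix Real

noncomputable def Hmat (f g ν τ : ℝ) : Matrix (Fin 3) (Fin 3) ℝ :=
  !![0, -(f * Real.sin τ), g * Real.cos τ;
     f * Real.sin τ, 0, -ν;
     -(g * Real.cos τ), ν, 0]

open Set

section LinearODE

variable {𝔸 : Type*}

theorem lipschitzWith_mul_left [NonUnitalSeminormedRing 𝔸] {a : 𝔸} {K : NNReal} (ha : ‖a‖₊ ≤ K) :
    LipschitzWith K (a * ·) :=
  LipschitzWith.of_dist_le_mul fun x y => by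
    rw [dist_eq_norm, dist_eq_norm, ← mul_sub]
    exact (norm_mul_le _ _).trans (by gcongr; exact_mod_cast ha)

theorem eq_of_hasDerivAt_mul_left [NonUnitalNormedRing 𝔸] [NormedSpace ℝ 𝔸] {A X Y : ℝ → 𝔸}
    (hA : Continuous A) (hX : ∀ t, HasDerivAt X (A t * X t) t)
    (hY : ∀ t, HasDerivAt Y (A t * Y t) t) {t₀ : ℝ} (h : X t₀ = Y t₀) : X = Y := by
  funext t
  obtain ⟨a, b, ht, ht₀⟩ : ∃ a b, t ∈ Ioo a b ∧ t₀ ∈ Ioo a b :=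
    ⟨min t t₀ - 1, max t t₀ + 1, by grind⟩
  obtain ⟨K, hK⟩ := isCompact_Icc.exists_bound_of_continuousOn (hA.continuousOn (s := Icc a b))
  have hlip (s : ℝ) (hs : s ∈ Ioo a b) : LipschitzOnWith K.toNNReal (A s * ·) univ :=
    (lipschitzWith_mul_left <| by
      rw [← NNReal.coe_le_coe, coe_nnnorm]
      exact (hK s (Ioo_subset_Icc_self hs)).trans K.le_coe_toNNReal).lipschitzOnWith
  exact ODE_solution_unique_of_mem_Ioo hlip ht₀ (fun s _ => ⟨hX s, trivial⟩)
    (fun s _ => ⟨hY s, trivial⟩) h ht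

theorem add_eq_conj_mul_of_hasDerivAt_mul_left [NormedRing 𝔸] [NormedAlgebra ℝ 𝔸] {A X : ℝ → 𝔸}
    (hA : Continuous A) {T : 𝔸} (hT : T * T = 1) {p : ℝ} (hAp : ∀ t, A (p + t) = T * A t * T)
    (hX : ∀ t, HasDerivAt X (A t * X t) t) (hX0 : X 0 = 1) (t : ℝ) :
    X (p + t) = T * X t * T * X p := by
  have hshift (s : ℝ) : HasDerivAt (fun s => X (p + s)) (A (p + s) * X (p + s)) s :=
    (hX (p + s)).comp_const_add p s
  have hconj (s : ℝ) :
      HasDerivAt (fun s => T * X s * T * X p) (A (p + s) * (T * X s * T * X p)) s := by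
    convert (((hX s).const_mul T).mul_const T).mul_const (X p) using 1
    rw [hAp]
    simp only [mul_assoc]
    rw [← mul_assoc T T, hT, one_mul]
  refine congrFun (eq_of_hasDerivAt_mul_left (hA.comp (continuous_const_add p)) hshift hconj
    (t₀ := 0) ?_) t
  simp only [add_zero, hX0, mul_one, hT, one_mul]

end LinearODE

theorem Matrix.hasDerivAt_iff {𝕜 E m n : Type*} [NontriviallyNormedField 𝕜] [NormedAddCommGroup E]
    [NormedSpace 𝕜 E] [Fintype m] [Fintype n] {X : 𝕜 → Matrix m n E} {X' : Matrix m n E} {t : 𝕜} :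
    HasDerivAt X X' t ↔ ∀ i j, HasDerivAt (fun s => X s i j) (X' i j) t := by
  change HasDerivAt (fun s => of.symm (X s)) (of.symm X') t ↔ _
  simp only [hasDerivAt_pi]
  rfl

theorem diagonal_reflection_mul_self :
    diagonal ![-1, 1, 1] * diagonal ![-1, 1, 1] = (1 : Matrix (Fin 3) (Fin 3) ℝ) := by
  rw [diagonal_mul_diagonal, ← diagonal_one]
  congr 1
  ext i
  fin_cases i <;> simp

theorem continuous_Hmat (f g ν : ℝ) : Continuous (Hmat f g ν) :=
  continuous_pi fun i => continuous_pi fun j => by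
    fin_cases i <;> fin_cases j <;> simp [Hmat] <;> fun_prop

theorem Hmat_pi_add (f g ν τ : ℝ) :
    Hmat f g ν (π + τ) = diagonal ![-1, 1, 1] * Hmat f g ν τ * diagonal ![-1, 1, 1] := by
  ext i j
  fin_cases i <;> fin_cases j <;> simp [Hmat, sin_add, cos_add]

/-- If `R` solves `R' = H R`, `R 0 = 1`, then `R(π + τ) = T⁽¹⁾ R(τ) T⁽¹⁾ R(π)`. -/
theorem stmt_5 (f g ν : ℝ) (R : ℝ → Matrix (Fin 3) (Fin 3) ℝ)
    (hR : ∀ τ, ∀ i j, HasDerivAt (fun t => R t i j) ((Hmat f g ν τ * R τ) i j) τ)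
    (hR0 : R 0 = 1) (τ : ℝ) :
    R (π + τ) = (Matrix.diagonal ![-1, 1, 1]) * R τ * (Matrix.diagonal ![-1, 1, 1]) * R π := by
  -- Any algebra norm on matrices would do: derivatives only see the (product) topology.
  let : NormedRing (Matrix (Fin 3) (Fin 3) ℝ) := Matrix.linftyOpNormedRing
  let : NormedAlgebra ℝ (Matrix (Fin 3) (Fin 3) ℝ) := Matrix.linftyOpNormedAlgebra
  exact add_eq_conj_mul_of_hasDerivAt_mul_left (continuous_Hmat f g ν)
    diagonal_reflection_mul_self (Hmat_pi_add f g ν) (fun t => Matrix.hasDerivAt_iff.2 (hR t))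
    hR0 τ
end

section
/- With R(·) as above and T⁽¹³⁾ = diag(−1, 1, −1), one has R(π − τ) = T⁽¹³⁾ R(τ) T⁽¹³⁾ R(π) for all τ ∈ ℝ. In particular, setting τ = π/2 and solving, R(π) = T⁽¹³⁾ R(π/2)ᵀ T⁽¹³⁾ R(π/2). -/
open Matrix Real

/-! The skew-symmetry of `H` makes `R(τ)ᵀ X(τ)` constant for any two solutions `R`, `X` of
`X' = H X`; with `X = R` this is orthogonality. The reflection `T⁽¹³⁾` satisfies
`T H(π - τ) = -H(τ) T`, so `X(τ) = T R(π - τ)` is again a solution, and the conserved quantity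
`R(τ)ᵀ T R(π - τ) = T R(π)` gives both identities. -/

theorem Matrix.eq_of_hasDerivAt_apply_zero {m n : Type*} {A : ℝ → Matrix m n ℝ}
    (h : ∀ τ i j, HasDerivAt (fun t => A t i j) 0 τ) (τ σ : ℝ) : A τ = A σ := by
  ext i j
  exact is_const_of_deriv_eq_zero (fun t => (h t i j).differentiableAt)
    (fun t => (h t i j).deriv) τ σ

section MatrixODE

variable {n : Type*} [Fintype n]

def SolvesMatrixODE (H X : ℝ → Matrix n n ℝ) : Prop :=
  ∀ τ i j, HasDerivAt (fun t => X t i j) ((H τ * X τ) i j) τ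

theorem Matrix.hasDerivAt_mul_apply {A B : ℝ → Matrix n n ℝ} {A' B' : Matrix n n ℝ} {τ : ℝ}
    (hA : ∀ i j, HasDerivAt (fun t => A t i j) (A' i j) τ)
    (hB : ∀ i j, HasDerivAt (fun t => B t i j) (B' i j) τ) (i j : n) :
    HasDerivAt (fun t => (A t * B t) i j) ((A' * B τ + A τ * B') i j) τ := by
  simpa only [mul_apply, add_apply, ← Finset.sum_add_distrib] using
    HasDerivAt.fun_sum fun k _ => (hA i k).fun_mul (hB k j)

theorem SolvesMatrixODE.transpose_mul_eq {H X Y : ℝ → Matrix n n ℝ}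
    (hH : ∀ τ, (H τ)ᵀ = -H τ) (hX : SolvesMatrixODE H X) (hY : SolvesMatrixODE H Y)
    (τ σ : ℝ) : (X τ)ᵀ * Y τ = (X σ)ᵀ * Y σ := by
  refine eq_of_hasDerivAt_apply_zero (A := fun t => (X t)ᵀ * Y t) (fun τ i j => ?_) τ σ
  have hXt : ∀ i j, HasDerivAt (fun t => (X t)ᵀ i j) ((H τ * X τ)ᵀ i j) τ :=
    fun i j => hX τ j i
  have hzero : (H τ * X τ)ᵀ * Y τ + (X τ)ᵀ * (H τ * Y τ) = 0 := by
    rw [transpose_mul, hH, Matrix.mul_neg, Matrix.neg_mul, Matrix.mul_assoc, neg_add_cancel]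
  simpa only [hzero, Matrix.zero_apply] using hasDerivAt_mul_apply hXt (hY τ) i j

theorem SolvesMatrixODE.const_mul_reflect {H X : ℝ → Matrix n n ℝ} {C : Matrix n n ℝ} {a : ℝ}
    (hC : ∀ τ, C * H (a - τ) = -H τ * C) (hX : SolvesMatrixODE H X) :
    SolvesMatrixODE H (fun τ => C * X (a - τ)) := by
  intro τ i j
  have hXa : ∀ i j, HasDerivAt (fun t => X (a - t) i j) (-(H (a - τ) * X (a - τ)) i j) τ := by
    intro i j
    simpa using (hX (a - τ) i j).comp_const_sub a τ
  have hCX := hasDerivAt_mul_apply (A := fun _ => C) (A' := 0) (B' := -(H (a - τ) * X (a - τ)))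
    (fun i j => hasDerivAt_const τ (C i j)) hXa i j
  rwa [Matrix.zero_mul, zero_add, Matrix.mul_neg, ← Matrix.mul_assoc, hC, Matrix.neg_mul,
    Matrix.neg_mul, neg_neg, Matrix.mul_assoc] at hCX

end MatrixODE

theorem Matrix.eq_mul_of_transpose_mul_eq {n α : Type*} [Fintype n] [DecidableEq n]
    [CommRing α] {A B C T : Matrix n n α} (hA : Aᵀ * A = 1) (hT : T * T = 1) (h : Aᵀ * (T * B) = C) :
    B = T * A * C := by
  rw [← h, Matrix.mul_assoc T, ← Matrix.mul_assoc A, mul_eq_one_comm.mp hA, Matrix.one_mul,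
    ← Matrix.mul_assoc, hT, Matrix.one_mul]

theorem diagonal_neg_one_one_neg_one_mul_self :
    (diagonal ![-1, 1, -1] : Matrix (Fin 3) (Fin 3) ℝ) * diagonal ![-1, 1, -1] = 1 := by
  rw [diagonal_mul_diagonal, ← diagonal_one]
  congr 1
  ext i
  fin_cases i <;> simp

theorem Hmat_transpose (f g ν τ : ℝ) : (Hmat f g ν τ)ᵀ = -Hmat f g ν τ := by
  ext i j
  fin_cases i <;> fin_cases j <;> simp [Hmat]

theorem diagonal_mul_Hmat_pi_sub (f g ν τ : ℝ) :
    diagonal ![-1, 1, -1] * Hmat f g ν (π - τ) = -Hmat f g ν τ * diagonal ![-1, 1, -1] := by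
  ext i j
  fin_cases i <;> fin_cases j <;> simp [Hmat, mul_apply, Fin.sum_univ_three]

/-- If `R` solves `R' = H R`, `R 0 = 1`, then `R(π − τ) = T⁽¹³⁾ R(τ) T⁽¹³⁾ R(π)`;
in particular `R(π) = T⁽¹³⁾ R(π/2)ᵀ T⁽¹³⁾ R(π/2)`. -/
theorem stmt_6 (f g ν : ℝ) (R : ℝ → Matrix (Fin 3) (Fin 3) ℝ)
    (hR : ∀ τ, ∀ i j, HasDerivAt (fun t => R t i j) ((Hmat f g ν τ * R τ) i j) τ)
    (hR0 : R 0 = 1) :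
    (∀ τ : ℝ, R (π - τ) =
        (Matrix.diagonal ![-1, 1, -1]) * R τ * (Matrix.diagonal ![-1, 1, -1]) * R π) ∧
    R π = (Matrix.diagonal ![-1, 1, -1]) * (R (π/2))ᵀ * (Matrix.diagonal ![-1, 1, -1])
            * R (π/2) := by
  set T : Matrix (Fin 3) (Fin 3) ℝ := diagonal ![-1, 1, -1]
  have hSol : SolvesMatrixODE (Hmat f g ν) R := hR
  have hReflSol : SolvesMatrixODE (Hmat f g ν) (fun τ => T * R (π - τ)) :=
    hSol.const_mul_reflect (diagonal_mul_Hmat_pi_sub f g ν)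
  have hOrth (τ : ℝ) : (R τ)ᵀ * R τ = 1 := by
    rw [hSol.transpose_mul_eq (Hmat_transpose f g ν) hSol τ 0, hR0, transpose_one,
      Matrix.one_mul]
  have hConst (τ : ℝ) : (R τ)ᵀ * (T * R (π - τ)) = T * R π := by
    rw [hSol.transpose_mul_eq (Hmat_transpose f g ν) hReflSol τ 0, hR0, transpose_one,
      Matrix.one_mul, sub_zero]
  refine ⟨fun τ => ?_, ?_⟩
  · rw [eq_mul_of_transpose_mul_eq (hOrth τ) diagonal_neg_one_one_neg_one_mul_self (hConst τ),
      Matrix.mul_assoc _ T]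
  · have hHalf := hConst (π / 2)
    rw [show π - π / 2 = π / 2 by ring] at hHalf
    rw [Matrix.mul_assoc (T * _), Matrix.mul_assoc T, hHalf, ← Matrix.mul_assoc,
      diagonal_neg_one_one_neg_one_mul_self, Matrix.one_mul]
end

section
/- Let S : ℝ → ℝ³ satisfy S'(τ) = h(τ) × S(τ) with h(τ) = (ν, g cos τ, f sin τ). If S₃(0) = 0 then S₁ and S₂ are even functions of τ and S₃ is an odd function of τ. Conversely if S₁(0) = S₂(0) = 0 then S₁ and S₂ are odd and S₃ is even. -/
open Matrix Real

/-- The field vector `h(τ) = (ν, g cos τ, f sin τ)`. -/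
noncomputable def hvec (f g ν τ : ℝ) : Fin 3 → ℝ :=
  ![ν, g * Real.cos τ, f * Real.sin τ]

/-!
For `c : ℝ` let `ρ_c = diag(c, c, -c)`. The reflection `ρ₁` reverses orientation and
`h(-τ) = ρ₁ h(τ)`, so `h(τ) × ρ_c x = -ρ_c (h(-τ) × x)`: the equation is reversible with
respect to every `ρ_c`, and `τ ↦ ρ_c S(-τ)` is again a solution. If `ρ_c S(0) = S(0)`, which is
`S₃(0) = 0` for `c = 1` and `S₁(0) = S₂(0) = 0` for `c = -1`, uniqueness of solutions of this
linear equation with bounded coefficients gives `ρ_c S(-τ) = S(τ)`.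
-/

theorem ODE_solution_eq_of_reversible {E : Type*} [NormedAddCommGroup E] [NormedSpace ℝ E]
    {K : NNReal} {v : ℝ → E → E} (hv : ∀ t, LipschitzWith K (v t)) (R : E →L[ℝ] E)
    (hR : ∀ t x, v t (R x) = -R (v (-t) x)) {S : ℝ → E}
    (hS : ∀ t, HasDerivAt S (v t (S t)) t) (h0 : R (S 0) = S 0) (t : ℝ) :
    R (S (-t)) = S t := by
  have hRS : ∀ t, HasDerivAt (fun t => R (S (-t))) (v t (R (S (-t)))) t := fun t => by
    have := R.hasFDerivAt.comp_hasDerivAt t ((hS (-t)).scomp t (hasDerivAt_neg t))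
    rw [neg_one_smul, map_neg] at this
    rw [hR]
    exact this
  refine congrFun (ODE_solution_unique_univ (s := fun _ => Set.univ) (t₀ := 0)
    (fun t => (hv t).lipschitzOnWith) (fun t => ⟨hRS t, trivial⟩) (fun t => ⟨hS t, trivial⟩) ?_) t
  simpa using h0

theorem norm_cross_le (a b : Fin 3 → ℝ) : ‖a ⨯₃ b‖ ≤ 2 * ‖a‖ * ‖b‖ := by
  have hab : ∀ i j, |a i * b j| ≤ ‖a‖ * ‖b‖ := fun i j => by
    rw [abs_mul]
    exact mul_le_mul (norm_le_pi_norm a i) (norm_le_pi_norm b j) (abs_nonneg _) (norm_nonneg _)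
  refine (pi_norm_le_iff_of_nonneg (by positivity)).2 fun i => ?_
  rw [Real.norm_eq_abs]
  fin_cases i <;>
  · simp only [cross_apply, Fin.zero_eta, Fin.mk_one, Fin.reduceFinMk, Fin.isValue, cons_val_zero,
      cons_val_one, cons_val]
    refine (abs_sub _ _).trans ?_
    linarith [hab 0 1, hab 0 2, hab 1 0, hab 1 2, hab 2 0, hab 2 1]

theorem lipschitzWith_cross {a : Fin 3 → ℝ} {C : NNReal} (ha : ‖a‖ ≤ C) :
    LipschitzWith (2 * C) (a ⨯₃ ·) := by
  refine LipschitzWith.of_dist_le_mul fun x y => ?_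
  rw [dist_eq_norm, dist_eq_norm, ← map_sub]
  calc ‖a ⨯₃ (x - y)‖ ≤ 2 * ‖a‖ * ‖x - y‖ := norm_cross_le a (x - y)
    _ ≤ ↑(2 * C) * ‖x - y‖ := by push_cast; gcongr

theorem norm_hvec_le (f g ν τ : ℝ) : ‖hvec f g ν τ‖ ≤ |ν| + |g| + |f| := by
  refine (pi_norm_le_iff_of_nonneg (by positivity)).2 fun i => ?_
  rw [Real.norm_eq_abs]
  have hcos : |g| * |cos τ| ≤ |g| := mul_le_of_le_one_right (abs_nonneg g) (abs_cos_le_one τ)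
  have hsin : |f| * |sin τ| ≤ |f| := mul_le_of_le_one_right (abs_nonneg f) (abs_sin_le_one τ)
  fin_cases i <;>
  · simp only [hvec, Fin.zero_eta, Fin.mk_one, Fin.reduceFinMk, Fin.isValue, cons_val_zero,
      cons_val_one, cons_val, abs_mul]
    linarith [abs_nonneg ν, abs_nonneg g, abs_nonneg f]

theorem hvec_cross_mul_reflection (f g ν c τ : ℝ) (x : Fin 3 → ℝ) :
    hvec f g ν τ ⨯₃ (![c, c, -c] * x) = -(![c, c, -c] * (hvec f g ν (-τ) ⨯₃ x)) := by
  ext i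
  fin_cases i <;>
  · simp only [hvec, cross_apply, Fin.zero_eta, Fin.mk_one, Fin.reduceFinMk, Fin.isValue,
      cons_val_zero, cons_val_one, cons_val, Pi.mul_apply, Pi.neg_apply, cos_neg, sin_neg]
    ring

theorem reflection_mul_solution_neg_eq (f g ν c : ℝ) {S : ℝ → Fin 3 → ℝ}
    (hS : ∀ τ, HasDerivAt S (hvec f g ν τ ⨯₃ S τ) τ) (h0 : ![c, c, -c] * S 0 = S 0) (τ : ℝ) :
    ![c, c, -c] * S (-τ) = S τ :=
  ODE_solution_eq_of_reversible (fun τ => lipschitzWith_cross (C := ⟨_, by positivity⟩)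
      (norm_hvec_le f g ν τ)) (ContinuousLinearMap.mul ℝ (Fin 3 → ℝ) ![c, c, -c])
    (hvec_cross_mul_reflection f g ν c) hS h0 τ

/-- Even/odd structure of solutions of `S' = h × S`: if `S₃(0) = 0` then
`S₁, S₂` are even and `S₃` is odd; if `S₁(0) = S₂(0) = 0` then `S₁, S₂` are
odd and `S₃` is even. -/
theorem stmt_7 (f g ν : ℝ) (S : ℝ → Fin 3 → ℝ)
    (hS : ∀ τ, ∀ i, HasDerivAt (fun t => S t i)
      ((crossProduct (hvec f g ν τ) (S τ)) i) τ) :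
    (S 0 2 = 0 →
      ∀ τ, S (-τ) 0 = S τ 0 ∧ S (-τ) 1 = S τ 1 ∧ S (-τ) 2 = -(S τ 2)) ∧
    (S 0 0 = 0 ∧ S 0 1 = 0 →
      ∀ τ, S (-τ) 0 = -(S τ 0) ∧ S (-τ) 1 = -(S τ 1) ∧ S (-τ) 2 = S τ 2) := by
  have hS' : ∀ τ, HasDerivAt S (hvec f g ν τ ⨯₃ S τ) τ := fun τ => hasDerivAt_pi.2 (hS τ)
  refine ⟨fun h0 τ => ?_, fun ⟨h00, h01⟩ τ => ?_⟩
  · have h := congrFun <| reflection_mul_solution_neg_eq f g ν 1 hS'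
      (by ext i; fin_cases i <;> simp [h0]) τ
    exact ⟨by simpa using h 0, by simpa using h 1, by simpa [neg_eq_iff_eq_neg] using h 2⟩
  · have h := congrFun <| reflection_mul_solution_neg_eq f g ν (-1) hS'
      (by ext i; fin_cases i <;> simp [h00, h01]) τ
    exact ⟨by simpa [neg_eq_iff_eq_neg] using h 0, by simpa [neg_eq_iff_eq_neg] using h 1,
      by simpa using h 2⟩
end

section
/- The full-period monodromy matrix R(2π) (given explicitly in terms of r and α as above) has (cos α, sin α, 0)ᵀ as an eigenvector with eigenvalue 1, and its other two eigenvalues are exp(±i ρ) with cos ρ = 1 − 8r²(1−r²); equivalently, Tr R(2π) = 1 + 2(1 − 8r² + 8r⁴). -/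
open Matrix Real Complex

noncomputable def Rfull (r α : ℝ) : Matrix (Fin 3) (Fin 3) ℝ :=
  !![(1 - 2*r^2)^2 + 4*r^2*(1 - r^2) * Real.cos (2*α),
       4*r^2*(1 - r^2) * Real.sin (2*α),
       4*r*Real.sqrt (1 - r^2) * (2*r^2 - 1) * Real.sin α;
     4*r^2*(1 - r^2) * Real.sin (2*α),
       4*r^2*(r^2 - 1) * Real.cos (2*α) + (1 - 2*r^2)^2,
       4*r*(1 - 2*r^2)*Real.sqrt (1 - r^2) * Real.cos α;
     4*r*(1 - 2*r^2)*Real.sqrt (1 - r^2) * Real.sin α,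
       4*r*Real.sqrt (1 - r^2) * (2*r^2 - 1) * Real.cos α,
       8*r^4 - 8*r^2 + 1]

/-!
`R(2π)` is the rotation by the angle `ρ = 2 arccos (1 - 2r²)` about the axis `n = (cos α, sin α, 0)`:
it fixes `n` and turns the orthonormal pair `e₃, n × e₃ = (-sin α, cos α, 0)` by `ρ`. Hence
`e₃ ∓ i (n × e₃)` are complex eigenvectors with eigenvalues `e^{±iρ}`, and the trace is `1 + 2 cos ρ`.
-/

theorem Matrix.mem_spectrum_of_mulVec_eq_smul {K n : Type*} [Field K] [Fintype n] [DecidableEq n]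
    {A : Matrix n n K} {v : n → K} {μ : K} (hv : v ≠ 0) (h : A *ᵥ v = μ • v) :
    μ ∈ spectrum K A := by
  rw [← Matrix.spectrum_toLin']
  exact (Module.End.hasEigenvalue_of_hasEigenvector
    ⟨Module.End.mem_eigenspace_iff.2 (by simpa using h), hv⟩).mem_spectrum

-- `u - i v` is an eigenvector for `e^{iθ}`.
theorem Matrix.exp_I_mul_mem_spectrum_map_ofReal {n : Type*} [Fintype n] [DecidableEq n]
    {M : Matrix n n ℝ} {u v : n → ℝ} {θ : ℝ} (hu0 : u ≠ 0)
    (hu : M *ᵥ u = Real.cos θ • u + Real.sin θ • v)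
    (hv : M *ᵥ v = Real.cos θ • v - Real.sin θ • u) :
    Complex.exp (Complex.I * θ) ∈ spectrum ℂ (M.map Complex.ofReal) := by
  have hmap (x : n → ℝ) : M.map ofReal *ᵥ (ofReal ∘ x) = ofReal ∘ (M *ᵥ x) :=
    funext fun i => (RingHom.map_mulVec ofRealHom M x i).symm
  refine Matrix.mem_spectrum_of_mulVec_eq_smul (v := ofReal ∘ u - Complex.I • (ofReal ∘ v)) ?_ ?_
  · intro h
    exact hu0 (funext fun i => by simpa using congrArg (fun w => (w i).re) h)
  · rw [mulVec_sub, mulVec_smul, hmap, hmap, hu, hv, mul_comm, Complex.exp_mul_I]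
    ext i
    simp only [Function.comp_apply, Pi.add_apply, Pi.sub_apply, Pi.smul_apply, smul_eq_mul,
      ofReal_add, ofReal_sub, ofReal_mul, ofReal_cos, ofReal_sin]
    linear_combination Complex.sin θ * (v i : ℂ) * Complex.I_sq

theorem Matrix.exp_neg_I_mul_mem_spectrum_map_ofReal {n : Type*} [Fintype n] [DecidableEq n]
    {M : Matrix n n ℝ} {u v : n → ℝ} {θ : ℝ} (hu0 : u ≠ 0)
    (hu : M *ᵥ u = Real.cos θ • u + Real.sin θ • v)
    (hv : M *ᵥ v = Real.cos θ • v - Real.sin θ • u) :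
    Complex.exp (-(Complex.I * θ)) ∈ spectrum ℂ (M.map Complex.ofReal) := by
  have key := Matrix.exp_I_mul_mem_spectrum_map_ofReal (θ := -θ) (v := -v) hu0
    (by rw [hu, Real.cos_neg, Real.sin_neg, neg_smul_neg])
    (by rw [mulVec_neg, hv, Real.cos_neg, Real.sin_neg, smul_neg, neg_smul]; abel)
  rwa [ofReal_neg, mul_neg] at key

/- Writing `r = sin φ`, this is `4φ`. Taking `arccos (1 - 8r²(1 - r²))` instead would give the
right cosine but a sine of the wrong sign whenever `1 - 2r² < 0`. -/
noncomputable def monodromyAngle (r : ℝ) : ℝ := 2 * Real.arccos (1 - 2 * r ^ 2)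

theorem cos_monodromyAngle {r : ℝ} (hr : r ^ 2 ≤ 1) :
    Real.cos (monodromyAngle r) = 1 - 8 * r ^ 2 * (1 - r ^ 2) := by
  rw [monodromyAngle, Real.cos_two_mul, Real.cos_arccos (by linarith) (by nlinarith)]
  ring

theorem sin_monodromyAngle {r : ℝ} (hr₀ : 0 ≤ r) (hr : r ^ 2 ≤ 1) :
    Real.sin (monodromyAngle r) = 4 * r * √(1 - r ^ 2) * (1 - 2 * r ^ 2) := by
  have hsin : √(1 - (1 - 2 * r ^ 2) ^ 2) = 2 * r * √(1 - r ^ 2) := by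
    rw [show 1 - (1 - 2 * r ^ 2) ^ 2 = (2 * r) ^ 2 * (1 - r ^ 2) by ring,
      Real.sqrt_mul' _ (by linarith), Real.sqrt_sq (by linarith)]
  rw [monodromyAngle, Real.sin_two_mul, Real.sin_arccos, hsin,
    Real.cos_arccos (by linarith) (by nlinarith)]
  ring

theorem Rfull_mulVec_axis (r α : ℝ) :
    Rfull r α *ᵥ ![Real.cos α, Real.sin α, 0] = ![Real.cos α, Real.sin α, 0] := by
  have hpy := Real.sin_sq_add_cos_sq α
  ext i
  fin_cases i <;>
    simp [Rfull, mulVec, dotProduct, Fin.sum_univ_three, Real.cos_two_mul', Real.sin_two_mul]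
  · linear_combination 4 * r ^ 2 * (1 - r ^ 2) * Real.cos α * hpy
  · linear_combination 4 * r ^ 2 * (1 - r ^ 2) * Real.sin α * hpy
  · ring

theorem Rfull_mulVec_e₃ (r α : ℝ) :
    Rfull r α *ᵥ ![0, 0, 1] = (1 - 8 * r ^ 2 * (1 - r ^ 2)) • ![0, 0, 1]
      + (4 * r * √(1 - r ^ 2) * (1 - 2 * r ^ 2)) • ![-Real.sin α, Real.cos α, 0] := by
  ext i
  fin_cases i <;> simp [Rfull, mulVec, dotProduct, Fin.sum_univ_three, -mul_eq_mul_right_iff] <;>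
    ring

theorem Rfull_mulVec_axis_perp (r α : ℝ) :
    Rfull r α *ᵥ ![-Real.sin α, Real.cos α, 0] =
      (1 - 8 * r ^ 2 * (1 - r ^ 2)) • ![-Real.sin α, Real.cos α, 0]
      - (4 * r * √(1 - r ^ 2) * (1 - 2 * r ^ 2)) • ![0, 0, 1] := by
  have hpy := Real.sin_sq_add_cos_sq α
  ext i
  fin_cases i <;>
    simp [Rfull, mulVec, dotProduct, Fin.sum_univ_three, Real.cos_two_mul', Real.sin_two_mul]
  · linear_combination 4 * r ^ 2 * (1 - r ^ 2) * Real.sin α * hpy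
  · linear_combination -4 * r ^ 2 * (1 - r ^ 2) * Real.cos α * hpy
  · linear_combination -4 * r * √(1 - r ^ 2) * (1 - 2 * r ^ 2) * hpy

theorem Rfull_trace (r α : ℝ) : (Rfull r α).trace = 1 + 2 * (1 - 8 * r ^ 2 + 8 * r ^ 4) := by
  simp [Matrix.trace, Rfull, Fin.sum_univ_three]
  ring

/-- `(cos α, sin α, 0)` is a fixed vector of `R(2π)`, the other two eigenvalues
are `exp(±iρ)` with `cos ρ = 1 − 8r²(1−r²)`, and `Tr R(2π) = 1 + 2(1−8r²+8r⁴)`. -/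
theorem stmt_10 (r α : ℝ) (hr : r ∈ Set.Icc (0:ℝ) 1) :
    (Rfull r α).mulVec ![Real.cos α, Real.sin α, 0] = ![Real.cos α, Real.sin α, 0] ∧
    (Rfull r α).trace = 1 + 2 * (1 - 8*r^2 + 8*r^4) ∧
    ∃ ρ : ℝ, Real.cos ρ = 1 - 8*r^2*(1 - r^2) ∧
      Complex.exp (Complex.I * ρ) ∈ spectrum ℂ ((Rfull r α).map Complex.ofReal) ∧
      Complex.exp (-(Complex.I * ρ)) ∈ spectrum ℂ ((Rfull r α).map Complex.ofReal) := by
  obtain ⟨hr₀, hr₁⟩ := hr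
  have hr2 : r ^ 2 ≤ 1 := by nlinarith
  have he3 : ![(0 : ℝ), 0, 1] ≠ 0 := fun h => by simpa using congrFun h 2
  have hrot₁ := Rfull_mulVec_e₃ r α
  have hrot₂ := Rfull_mulVec_axis_perp r α
  rw [← cos_monodromyAngle hr2, ← sin_monodromyAngle hr₀ hr2] at hrot₁ hrot₂
  exact ⟨Rfull_mulVec_axis r α, Rfull_trace r α, monodromyAngle r, cos_monodromyAngle hr2,
    exp_I_mul_mem_spectrum_map_ofReal he3 hrot₁ hrot₂,
    exp_neg_I_mul_mem_spectrum_map_ofReal he3 hrot₁ hrot₂⟩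
end
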